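/- Let γ be fixed with 63/64 < γ < 1, let 0 < λ₀ < 1 be fixed, and let δ > 0. Then ∫_{0}^{1} |S₂(t)|⁴ dt ≪ X^{2-γ+δ}. -/

import Mathlib

set_option maxHeartbeats 1000000

open scoped Classical
open MeasureTheory

lemma divisor_bound (ε : ℝ) (hε : 0 < ε) :
    ∃ C > 0, ∀ n : ℕ, n ≠ 0 → (n.divisors.card : ℝ) ≤ C * (n : ℝ) ^ ε := by
  set K : ℝ := max 1 (2 / (ε * Real.log 2)) with hK
  have hK1 : (1:ℝ) ≤ K := le_max_left _ _
  have hK0 : (0:ℝ) < K := lt_of_lt_of_le one_pos hK1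
  set B : ℕ := ⌈(2:ℝ) ^ (1/ε)⌉₊ with hB
  refine ⟨K ^ B, pow_pos hK0 B, ?_⟩
  intro n hn
  have hcard := Nat.card_divisors hn
  -- termwise bound
  have key : ∀ p ∈ n.primeFactors,
      ((n.factorization p + 1 : ℕ) : ℝ) ≤
        (if p < B then K else 1) * ((p ^ n.factorization p : ℕ) : ℝ) ^ ε := by
    intro p hp
    have hpp : p.Prime := Nat.prime_of_mem_primeFactors hp
    have hp2 : (2:ℝ) ≤ (p:ℝ) := by exact_mod_cast hpp.two_le
    set a : ℕ := n.factorization p with ha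
    have ha1 : 1 ≤ a := (Nat.Prime.factorization_pos_of_dvd hpp hn
      (Nat.dvd_of_mem_primeFactors hp))
    have hcast : ((p ^ a : ℕ) : ℝ) ^ ε = (p:ℝ) ^ ((a:ℝ) * ε) := by
      push_cast
      rw [← Real.rpow_natCast (p:ℝ) a, ← Real.rpow_mul (by positivity)]
    rw [hcast]
    by_cases hpB : p < B
    · simp only [hpB, if_true]
      -- K * p^(aε) ≥ (2/(ε log 2)) * (a ε log 2) = 2a ≥ a+1
      have h1 : (a:ℝ) * ε * Real.log 2 ≤ (p:ℝ) ^ ((a:ℝ) * ε) := by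
        calc (a:ℝ) * ε * Real.log 2 ≤ Real.exp ((a:ℝ) * ε * Real.log 2) := by
              linarith [Real.add_one_le_exp ((a:ℝ) * ε * Real.log 2)]
          _ = (2:ℝ) ^ ((a:ℝ) * ε) := by
              rw [Real.rpow_def_of_pos (by norm_num : (0:ℝ) < 2)]
              ring_nf
          _ ≤ (p:ℝ) ^ ((a:ℝ) * ε) := by
              apply Real.rpow_le_rpow (by norm_num) hp2 (by positivity)
      have hlog2 : (0:ℝ) < Real.log 2 := Real.log_pos (by norm_num)
      have hK2 : 2 / (ε * Real.log 2) ≤ K := le_max_right _ _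
      have h2 : (2:ℝ) * a ≤ K * ((p:ℝ) ^ ((a:ℝ) * ε)) := by
        have := mul_le_mul hK2 h1 (by positivity) (le_of_lt hK0)
        calc (2:ℝ) * a = (2 / (ε * Real.log 2)) * ((a:ℝ) * ε * Real.log 2) := by
              field_simp
          _ ≤ K * ((p:ℝ) ^ ((a:ℝ) * ε)) := this
      have : ((a:ℝ)) + 1 ≤ 2 * a := by
        have : (1:ℝ) ≤ (a:ℝ) := by exact_mod_cast ha1
        linarith
      push_cast
      linarith
    · simp only [hpB, if_false, one_mul]
      -- p ≥ 2^(1/ε), so p^(aε) ≥ 2^a ≥ a+1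
      have hpB' : (2:ℝ) ^ (1/ε) ≤ (p:ℝ) := by
        have : (B:ℝ) ≤ (p:ℝ) := by exact_mod_cast Nat.le_of_not_lt hpB
        exact le_trans (Nat.le_ceil _) this
      have h1 : (2:ℝ) ^ ((1/ε) * ((a:ℝ) * ε)) ≤ (p:ℝ) ^ ((a:ℝ) * ε) := by
        rw [Real.rpow_mul (by norm_num)]
        apply Real.rpow_le_rpow (by positivity) hpB' (by positivity)
      have he : (1/ε) * ((a:ℝ) * ε) = (a:ℝ) := by field_simp
      rw [he] at h1
      have h2 : ((a:ℕ):ℝ) + 1 ≤ (2:ℝ) ^ ((a:ℝ)) := by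
        rw [Real.rpow_natCast]
        exact_mod_cast Nat.lt_two_pow_self (n := a)
      push_cast at h2 ⊢
      linarith
  -- combine
  have h1 : ((n.divisors.card : ℕ) : ℝ) =
      ∏ p ∈ n.primeFactors, ((n.factorization p + 1 : ℕ) : ℝ) := by
    rw [hcard]; push_cast; ring
  rw [h1]
  calc ∏ p ∈ n.primeFactors, ((n.factorization p + 1 : ℕ) : ℝ)
      ≤ ∏ p ∈ n.primeFactors,
          ((if p < B then K else 1) * ((p ^ n.factorization p : ℕ) : ℝ) ^ ε) := by
        apply Finset.prod_le_prod (fun p _ => by positivity) key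
    _ = (∏ p ∈ n.primeFactors, (if p < B then K else 1)) *
          ∏ p ∈ n.primeFactors, ((p ^ n.factorization p : ℕ) : ℝ) ^ ε := by
        rw [Finset.prod_mul_distrib]
    _ ≤ K ^ B * (n:ℝ) ^ ε := by
        have hprod2 : ∏ p ∈ n.primeFactors, ((p ^ n.factorization p : ℕ) : ℝ) ^ ε
            = (n:ℝ) ^ ε := by
          rw [Real.finset_prod_rpow _ _ (fun p _ => by positivity)]
          congr 1
          rw [← Nat.cast_prod]
          congr 1
          conv_rhs => rw [← Nat.factorization_prod_pow_eq_self hn]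
          rw [← Nat.support_factorization]
          rfl
        rw [hprod2]
        apply mul_le_mul_of_nonneg_right _ (by positivity)
        calc ∏ p ∈ n.primeFactors, (if p < B then K else 1)
            ≤ ∏ p ∈ n.primeFactors.filter (· < B), K := by
              rw [← Finset.prod_filter_mul_prod_filter_not n.primeFactors (· < B)]
              have : ∏ p ∈ n.primeFactors.filter (fun p => ¬ p < B),
                  (if p < B then K else 1) = 1 := by
                apply Finset.prod_eq_one
                intro p hp
                simp [(Finset.mem_filter.mp hp).2]
              rw [this, mul_one]
              apply le_of_eq
              apply Finset.prod_congr rfl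
              intro p hp
              simp [(Finset.mem_filter.mp hp).2]
          _ = K ^ (n.primeFactors.filter (· < B)).card := by
              rw [Finset.prod_const]
          _ ≤ K ^ B := by
              apply pow_le_pow_right₀ hK1
              calc (n.primeFactors.filter (· < B)).card
                  ≤ (Finset.range B).card := by
                    apply Finset.card_le_card
                    intro p hp
                    simp only [Finset.mem_range]
                    exact (Finset.mem_filter.mp hp).2
                _ = B := Finset.card_range B

lemma orth (k : ℤ) :
    ∫ t in (0:ℝ)..1, Complex.exp ((2 * Real.pi * Complex.I * k) * t)
      = if k = 0 then 1 else 0 := by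
  by_cases hk : k = 0
  · simp [hk]
  · rw [if_neg hk]
    have hc : (2 * Real.pi * Complex.I * k : ℂ) ≠ 0 := by
      simp [Real.pi_ne_zero, Complex.I_ne_zero, hk]
    rw [integral_exp_mul_complex hc]
    have h1 : Complex.exp (2 * Real.pi * Complex.I * k * (1:ℝ)) = 1 := by
      rw [show (2 * Real.pi * Complex.I * k * ((1:ℝ):ℂ)) = k * (2 * Real.pi * Complex.I) by
        push_cast; ring]
      exact Complex.exp_int_mul_two_pi_mul_I k
    have h0 : Complex.exp (2 * Real.pi * Complex.I * k * ((0:ℝ):ℂ)) = 1 := by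
      norm_num
    rw [h1, h0]
    simp


lemma quad_int (F : Finset ℕ) (c : ℕ → ℕ → ℕ → ℕ → ℝ) (k : ℕ → ℕ → ℕ → ℕ → ℤ) :
    (∫ t in (0:ℝ)..1, ∑ p ∈ F, ∑ q ∈ F, ∑ r ∈ F, ∑ s ∈ F,
      (c p q r s : ℂ) * Complex.exp ((2 * Real.pi * Complex.I * (k p q r s : ℂ)) * (t:ℝ)))
    = ∑ p ∈ F, ∑ q ∈ F, ∑ r ∈ F, ∑ s ∈ F,
      (c p q r s : ℂ) * (if k p q r s = 0 then 1 else 0) := by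
  have hc1 : ∀ (c' : ℝ) (k' : ℤ), Continuous (fun t : ℝ =>
      (c' : ℂ) * Complex.exp ((2 * Real.pi * Complex.I * (k' : ℂ)) * (t : ℝ))) := by
    intro c' k'
    fun_prop
  have hintg : ∀ (c' : ℝ) (k' : ℤ), IntervalIntegrable (fun t : ℝ =>
      (c' : ℂ) * Complex.exp ((2 * Real.pi * Complex.I * (k' : ℂ)) * (t : ℝ)))
      MeasureTheory.volume 0 1 := fun c' k' => (hc1 c' k').intervalIntegrable 0 1
  have h3 : ∀ p q r : ℕ, Continuous (fun t : ℝ => ∑ s ∈ F,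
      (c p q r s : ℂ) * Complex.exp ((2 * Real.pi * Complex.I * (k p q r s : ℂ)) * (t:ℝ))) :=
    fun p q r => continuous_finset_sum F (fun s _ => hc1 _ _)
  have h2 : ∀ p q : ℕ, Continuous (fun t : ℝ => ∑ r ∈ F, ∑ s ∈ F,
      (c p q r s : ℂ) * Complex.exp ((2 * Real.pi * Complex.I * (k p q r s : ℂ)) * (t:ℝ))) :=
    fun p q => continuous_finset_sum F (fun r _ => h3 p q r)
  have h1 : ∀ p : ℕ, Continuous (fun t : ℝ => ∑ q ∈ F, ∑ r ∈ F, ∑ s ∈ F,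
      (c p q r s : ℂ) * Complex.exp ((2 * Real.pi * Complex.I * (k p q r s : ℂ)) * (t:ℝ))) :=
    fun p => continuous_finset_sum F (fun q _ => h2 p q)
  rw [intervalIntegral.integral_finset_sum
    (fun p _ => (h1 p).intervalIntegrable 0 1)]
  refine Finset.sum_congr rfl fun p _ => ?_
  rw [intervalIntegral.integral_finset_sum
    (fun q _ => (h2 p q).intervalIntegrable 0 1)]
  refine Finset.sum_congr rfl fun q _ => ?_
  rw [intervalIntegral.integral_finset_sum
    (fun r _ => (h3 p q r).intervalIntegrable 0 1)]
  refine Finset.sum_congr rfl fun r _ => ?_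
  rw [intervalIntegral.integral_finset_sum (fun s _ => hintg _ _)]

  refine Finset.sum_congr rfl fun s _ => ?_
  rw [intervalIntegral.integral_const_mul, orth]

lemma fourth_moment (F : Finset ℕ) (a : ℕ → ℝ) :
    ∫ t in (0:ℝ)..1,
      ‖∑ p ∈ F, (a p : ℂ) *
          Complex.exp (2 * Real.pi * Complex.I * ((t : ℝ) * (p : ℝ) ^ 2))‖ ^ 4
    = ∑ p ∈ F, ∑ q ∈ F, ∑ r ∈ F, ∑ s ∈ F,
        (a p * a r * a q * a s) *
          (if ((p:ℤ)^2 + (r:ℤ)^2 - (q:ℤ)^2 - (s:ℤ)^2 = 0) then 1 else 0) := by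
  set S : ℝ → ℂ := fun t => ∑ p ∈ F, (a p : ℂ) *
      Complex.exp (2 * Real.pi * Complex.I * ((t : ℝ) * (p : ℝ) ^ 2)) with hS
  set W : ℝ → ℂ := fun t => (S t) ^ 2 * ((starRingEnd ℂ) (S t)) ^ 2 with hW
  -- pointwise norm identity
  have hnorm : ∀ t : ℝ, ‖S t‖ ^ 4 = (W t).re := by
    intro t
    have h1 : W t = ((S t) * (starRingEnd ℂ) (S t)) ^ 2 := by rw [hW]; ring
    rw [h1, Complex.mul_conj, ← Complex.ofReal_pow, Complex.ofReal_re,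
      Complex.normSq_eq_norm_sq]
    ring
  -- pointwise expansion
  have hexp : ∀ t : ℝ, W t = ∑ p ∈ F, ∑ q ∈ F, ∑ r ∈ F, ∑ s ∈ F,
      ((a p * a r * a q * a s : ℝ) : ℂ) *
        Complex.exp ((2 * Real.pi * Complex.I *
          (((p:ℤ)^2 + (r:ℤ)^2 - (q:ℤ)^2 - (s:ℤ)^2 : ℤ) : ℂ)) * (t : ℝ)) := by
    intro t
    have conj_f : ∀ q : ℕ, (starRingEnd ℂ) ((a q : ℂ) *
        Complex.exp (2 * Real.pi * Complex.I * ((t : ℝ) * (q : ℝ) ^ 2)))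
        = (a q : ℂ) * Complex.exp (-(2 * Real.pi * Complex.I * ((t : ℝ) * (q : ℝ) ^ 2))) := by
      intro q
      rw [map_mul, Complex.conj_ofReal, ← Complex.exp_conj]
      congr 2
      simp only [map_mul, map_neg, Complex.conj_I, Complex.conj_ofReal, map_ofNat, map_pow]
      ring
    have e1 : S t ^ 2 = ∑ p ∈ F, ∑ r ∈ F,
        ((a p : ℂ) * Complex.exp (2 * Real.pi * Complex.I * ((t : ℝ) * (p : ℝ) ^ 2))) *
        ((a r : ℂ) * Complex.exp (2 * Real.pi * Complex.I * ((t : ℝ) * (r : ℝ) ^ 2))) := by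
      rw [sq, hS, Finset.sum_mul_sum]
    have e2 : ((starRingEnd ℂ) (S t)) ^ 2 = ∑ q ∈ F, ∑ s ∈ F,
        ((a q : ℂ) * Complex.exp (-(2 * Real.pi * Complex.I * ((t : ℝ) * (q : ℝ) ^ 2)))) *
        ((a s : ℂ) * Complex.exp (-(2 * Real.pi * Complex.I * ((t : ℝ) * (s : ℝ) ^ 2)))) := by
      rw [hS, map_sum, sq, Finset.sum_mul_sum]
      refine Finset.sum_congr rfl fun q _ => Finset.sum_congr rfl fun s _ => ?_
      rw [conj_f, conj_f]
    rw [hW]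
    dsimp only
    rw [e1, e2, Finset.sum_mul_sum]
    refine Finset.sum_congr rfl fun p _ => ?_
    refine Finset.sum_congr rfl fun q _ => ?_
    rw [Finset.sum_mul_sum]
    refine Finset.sum_congr rfl fun r _ => ?_
    refine Finset.sum_congr rfl fun s _ => ?_
    rw [show ∀ z1 z2 z3 z4 : ℂ, ∀ c1 c2 c3 c4 : ℝ,
      ((c1:ℂ) * Complex.exp z1) * ((c2:ℂ) * Complex.exp z2) *
        (((c3:ℂ) * Complex.exp z3) * ((c4:ℂ) * Complex.exp z4))
      = ((c1 * c2 * c3 * c4 : ℝ) : ℂ) * Complex.exp (z1 + z2 + z3 + z4) from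
      fun z1 z2 z3 z4 c1 c2 c3 c4 => by
        rw [Complex.exp_add, Complex.exp_add, Complex.exp_add]; push_cast; ring]
    congr 2
    all_goals (push_cast; ring)
  -- continuity / integrability
  have hcont : ∀ (c : ℝ) (k : ℤ), Continuous fun t : ℝ =>
      (c : ℂ) * Complex.exp ((2 * Real.pi * Complex.I * (k : ℂ)) * (t : ℝ)) := by
    intro c k
    fun_prop
  have hintg : ∀ (c : ℝ) (k : ℤ), IntervalIntegrable (fun t : ℝ =>
      (c : ℂ) * Complex.exp ((2 * Real.pi * Complex.I * (k : ℂ)) * (t : ℝ)))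
      MeasureTheory.volume 0 1 := fun c k => (hcont c k).intervalIntegrable 0 1
  -- compute complex integral
  have hIW : ∫ t in (0:ℝ)..1, W t
      = ∑ p ∈ F, ∑ q ∈ F, ∑ r ∈ F, ∑ s ∈ F,
        ((a p * a r * a q * a s : ℝ) : ℂ) *
          (if ((p:ℤ)^2 + (r:ℤ)^2 - (q:ℤ)^2 - (s:ℤ)^2 = 0) then 1 else 0) := by
    rw [intervalIntegral.integral_congr (g := fun t => ∑ p ∈ F, ∑ q ∈ F, ∑ r ∈ F, ∑ s ∈ F,
      ((a p * a r * a q * a s : ℝ) : ℂ) *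
        Complex.exp ((2 * Real.pi * Complex.I *
          (((p:ℤ)^2 + (r:ℤ)^2 - (q:ℤ)^2 - (s:ℤ)^2 : ℤ) : ℂ)) * (t : ℝ)))
      (fun t _ => hexp t)]
    exact quad_int F (fun p q r s => a p * a r * a q * a s)
      (fun p q r s => (p:ℤ)^2 + (r:ℤ)^2 - (q:ℤ)^2 - (s:ℤ)^2)
  -- real part
  have hWcont : Continuous W := by
    apply Continuous.mul
    · apply Continuous.pow
      apply continuous_finset_sum
      intro p _
      fun_prop
    · apply Continuous.pow
      apply Complex.continuous_conj.comp
      apply continuous_finset_sum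
      intro p _
      fun_prop
  have hre : ∫ t in (0:ℝ)..1, ‖S t‖ ^ 4 = (∫ t in (0:ℝ)..1, W t).re := by
    rw [intervalIntegral.integral_congr (g := fun t => (W t).re) (fun t _ => hnorm t)]
    rw [intervalIntegral.integral_of_le (by norm_num : (0:ℝ) ≤ 1),
        intervalIntegral.integral_of_le (by norm_num : (0:ℝ) ≤ 1)]
    exact integral_re hWcont.integrableOn_Ioc
  rw [hre, hIW]
  -- push cast through
  have : (∑ p ∈ F, ∑ q ∈ F, ∑ r ∈ F, ∑ s ∈ F,
        ((a p * a r * a q * a s : ℝ) : ℂ) *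
          (if ((p:ℤ)^2 + (r:ℤ)^2 - (q:ℤ)^2 - (s:ℤ)^2 = 0) then (1:ℂ) else 0))
      = ((∑ p ∈ F, ∑ q ∈ F, ∑ r ∈ F, ∑ s ∈ F,
        (a p * a r * a q * a s) *
          (if ((p:ℤ)^2 + (r:ℤ)^2 - (q:ℤ)^2 - (s:ℤ)^2 = 0) then (1:ℝ) else 0) : ℝ) : ℂ) := by
    push_cast [apply_ite (Complex.ofReal)]
    norm_num
  rw [this, Complex.ofReal_re]

lemma quad_count (P : Finset ℕ) (hP1 : ∀ p ∈ P, 1 ≤ p) (D : ℝ) (hD0 : 0 ≤ D)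
    (hdivcard : ∀ p ∈ P, ∀ q ∈ P, p ≠ q →
      (((Int.natAbs ((p:ℤ)^2 - (q:ℤ)^2)).divisors.card : ℝ) ≤ D)) :
    ((((P ×ˢ P) ×ˢ (P ×ˢ P)).filter
        (fun x => x.1.1^2 + x.2.1^2 = x.1.2^2 + x.2.2^2)).card : ℝ)
      ≤ (P.card : ℝ)^2 * (1 + D) := by
  set Q := ((P ×ˢ P) ×ˢ (P ×ˢ P)).filter
      (fun x => x.1.1^2 + x.2.1^2 = x.1.2^2 + x.2.2^2) with hQ
  have hmemQ : ∀ x ∈ Q, (x.1.1 ∈ P ∧ x.1.2 ∈ P ∧ x.2.1 ∈ P ∧ x.2.2 ∈ P) ∧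
      x.1.1^2 + x.2.1^2 = x.1.2^2 + x.2.2^2 := by
    intro x hx
    obtain ⟨hx1, hx2⟩ := Finset.mem_filter.mp hx
    obtain ⟨h12, h34⟩ := Finset.mem_product.mp hx1
    obtain ⟨h1, h2⟩ := Finset.mem_product.mp h12
    obtain ⟨h3, h4⟩ := Finset.mem_product.mp h34
    exact ⟨⟨h1, h2, h3, h4⟩, hx2⟩
  have hsplit : Q.card = (Q.filter (fun x => x.1.1 = x.1.2)).card +
      (Q.filter (fun x => ¬ x.1.1 = x.1.2)).card :=
    (Finset.card_filter_add_card_filter_not _).symm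
  -- diagonal part
  have hQ1 : (Q.filter (fun x => x.1.1 = x.1.2)).card ≤ P.card ^ 2 := by
    have : (Q.filter (fun x => x.1.1 = x.1.2)).card ≤ (P ×ˢ P).card := by
      apply Finset.card_le_card_of_injOn (fun x => (x.1.1, x.2.1))
      · intro x hx
        obtain ⟨hxQ, _⟩ := Finset.mem_filter.mp hx
        obtain ⟨⟨h1, _, h3, _⟩, _⟩ := hmemQ x hxQ
        exact Finset.mem_product.mpr ⟨h1, h3⟩
      · rintro ⟨⟨p, q⟩, r, s⟩ hx ⟨⟨p', q'⟩, r', s'⟩ hy hxy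
        simp only [Prod.mk.injEq] at hxy
        obtain ⟨hp, hr⟩ := hxy
        obtain ⟨hxQ, hdg⟩ := Finset.mem_filter.mp hx
        obtain ⟨hyQ, hdg'⟩ := Finset.mem_filter.mp hy
        obtain ⟨_, heq⟩ := hmemQ _ hxQ
        obtain ⟨_, heq'⟩ := hmemQ _ hyQ
        simp only at hdg hdg' heq heq'
        subst hp hr
        have hq : q = p := hdg.symm
        have hq' : q' = p := hdg'.symm
        subst hq hq'
        have hs : r = s := by
          have h2 : r ^ 2 = s ^ 2 := by omega
          exact Nat.pow_left_injective (by norm_num) h2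
        have hs' : r = s' := by
          have h2 : r ^ 2 = s' ^ 2 := by omega
          exact Nat.pow_left_injective (by norm_num) h2
        simp [Prod.ext_iff, ← hs, ← hs']
    simpa [Finset.card_product, sq] using this
  -- off-diagonal part
  have hQ2 : ((Q.filter (fun x => ¬ x.1.1 = x.1.2)).card : ℝ) ≤ (P.card : ℝ)^2 * D := by
    set T := (P ×ˢ P).sigma
        (fun pq : ℕ × ℕ => (Int.natAbs ((pq.1:ℤ)^2 - (pq.2:ℤ)^2)).divisors) with hT
    have hcard : (Q.filter (fun x => ¬ x.1.1 = x.1.2)).card ≤ T.card := by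
      apply Finset.card_le_card_of_injOn
        (fun x => (⟨(x.1.1, x.1.2), x.2.1 + x.2.2⟩ : (_ : ℕ × ℕ) × ℕ))
      · rintro ⟨⟨p, q⟩, r, s⟩ hx
        obtain ⟨hxQ, hne⟩ := Finset.mem_filter.mp hx
        obtain ⟨⟨h1, h2, h3, h4⟩, heq⟩ := hmemQ _ hxQ
        simp only at hne heq h1 h2 h3 h4
        refine Finset.mem_sigma.mpr ⟨Finset.mem_product.mpr ⟨h1, h2⟩, ?_⟩
        refine Nat.mem_divisors.mpr ⟨?_, ?_⟩
        · dsimp only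
          rw [← Int.natAbs_natCast (r + s)]
          rw [Int.natAbs_dvd_natAbs]
          refine ⟨(s:ℤ) - r, ?_⟩
          have hcast : (p:ℤ)^2 + (r:ℤ)^2 = (q:ℤ)^2 + (s:ℤ)^2 := by exact_mod_cast heq
          push_cast
          nlinarith [hcast]
        · rw [Int.natAbs_ne_zero]
          intro h0
          have : (p:ℤ)^2 = (q:ℤ)^2 := by linarith [sub_eq_zero.mp h0]
          have : p^2 = q^2 := by exact_mod_cast this
          exact hne (Nat.pow_left_injective (by norm_num) this)
      · rintro ⟨⟨p, q⟩, r, s⟩ hx ⟨⟨p', q'⟩, r', s'⟩ hy hxy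
        have hfst := congrArg (fun z : (_ : ℕ × ℕ) × ℕ => z.fst) hxy
        have hsum := congrArg (fun z : (_ : ℕ × ℕ) × ℕ => z.snd) hxy
        simp only [Prod.mk.injEq] at hfst
        obtain ⟨hp, hq⟩ := hfst
        simp only at hsum
        subst hp hq
        obtain ⟨hxQ, hne⟩ := Finset.mem_filter.mp hx
        obtain ⟨hyQ, _⟩ := Finset.mem_filter.mp hy
        obtain ⟨⟨_, _, h3, h4⟩, heq⟩ := hmemQ _ hxQ
        obtain ⟨⟨_, _, h3', h4'⟩, heq'⟩ := hmemQ _ hyQ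
        simp only at heq heq' hne h3 h4 h3' h4'
        have hr1 : 1 ≤ r := hP1 _ h3
        have hcast : (p:ℤ)^2 + (r:ℤ)^2 = (q:ℤ)^2 + (s:ℤ)^2 := by exact_mod_cast heq
        have hcast' : (p:ℤ)^2 + (r':ℤ)^2 = (q:ℤ)^2 + (s':ℤ)^2 := by exact_mod_cast heq'
        have hsum' : (r:ℤ) + s = (r':ℤ) + s' := by exact_mod_cast hsum
        have hu : (r:ℤ) + s ≠ 0 := by omega
        have hmul : ((s:ℤ) - r) * ((r:ℤ) + s) = ((s':ℤ) - r') * ((r':ℤ) + s') := by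
          nlinarith [hcast, hcast']
        rw [← hsum'] at hmul
        have hdiff : (s:ℤ) - r = (s':ℤ) - r' := mul_right_cancel₀ hu hmul
        have : r = r' ∧ s = s' := by omega
        simp [Prod.ext_iff, this.1, this.2]
    calc ((Q.filter (fun x => ¬ x.1.1 = x.1.2)).card : ℝ) ≤ (T.card : ℝ) := by
          exact_mod_cast hcard
      _ ≤ (P.card : ℝ)^2 * D := by
          rw [hT, Finset.card_sigma]
          push_cast
          calc (∑ pq ∈ P ×ˢ P, ((Int.natAbs ((pq.1:ℤ)^2 - (pq.2:ℤ)^2)).divisors.card : ℝ))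
              ≤ ∑ _pq ∈ P ×ˢ P, D := by
                apply Finset.sum_le_sum
                rintro ⟨p, q⟩ hpq
                obtain ⟨hp, hq⟩ := Finset.mem_product.mp hpq
                by_cases hne : p = q
                · subst hne
                  simp [Int.natAbs_ne_zero]
                  exact hD0
                · exact hdivcard p hp q hq hne
            _ = (P.card : ℝ)^2 * D := by
                rw [Finset.sum_const, Finset.card_product]
                push_cast
                ring
  have hQ1' : ((Q.filter (fun x => x.1.1 = x.1.2)).card : ℝ) ≤ (P.card : ℝ)^2 := by
    exact_mod_cast hQ1
  have : (Q.card : ℝ) = ((Q.filter (fun x => x.1.1 = x.1.2)).card : ℝ) +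
      ((Q.filter (fun x => ¬ x.1.1 = x.1.2)).card : ℝ) := by exact_mod_cast hsplit
  rw [this]
  nlinarith [hQ1', hQ2]

lemma PS_count (γ X : ℝ) (hγ0 : 0 < γ) (hγ1 : γ ≤ 1) (hX1 : 1 ≤ X)
    (F : Finset ℕ) (cond : ℕ → Prop)
    (hcond : ∀ p, cond p → ((p:ℝ)^2 ≤ X ∧
      ∃ n : ℕ, 0 < n ∧ p = Nat.floor ((n:ℝ)^(1/γ)))) :
    ((F.filter cond).card : ℝ) ≤ 2 * X ^ (γ/2) := by
  have hX0 : (0:ℝ) < X := lt_of_lt_of_le one_pos hX1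
  set M : ℕ := ⌊2 * X ^ (γ/2)⌋₊ with hM
  set f : ℕ → ℕ := fun p =>
    if h : ∃ n : ℕ, 0 < n ∧ p = Nat.floor ((n:ℝ)^(1/γ)) then h.choose else 0 with hf
  have hcount : (F.filter cond).card ≤ (Finset.Icc 1 M).card := by
    apply Finset.card_le_card_of_injOn f
    · intro p hp
      have hcp : cond p := (Finset.mem_filter.mp hp).2
      obtain ⟨hp2, hex⟩ := hcond p hcp
      have hfp : f p = hex.choose := by rw [hf]; exact dif_pos hex
      obtain ⟨hn0, hnp⟩ := hex.choose_spec
      set n : ℕ := hex.choose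
      refine Finset.mem_Icc.mpr ⟨?_, ?_⟩
      · rw [hfp]; exact hn0
      rw [hfp]
      apply Nat.le_floor
      -- n < (p+1)^γ ≤ (2 sqrt X)^γ ≤ 2 X^(γ/2)
      have h1 : ((n:ℝ))^(1/γ) < (p:ℝ) + 1 := by
        have := Nat.lt_floor_add_one ((n:ℝ)^(1/γ))
        rw [← hnp] at this
        exact this
      have hnn : (0:ℝ) ≤ (n:ℝ)^(1/γ) := Real.rpow_nonneg (Nat.cast_nonneg n) _
      have h2 : (n:ℝ) < ((p:ℝ) + 1) ^ γ := by
        have h3 : ((n:ℝ)^(1/γ))^γ < ((p:ℝ) + 1)^γ :=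
          Real.rpow_lt_rpow hnn h1 hγ0
        rwa [← Real.rpow_mul (Nat.cast_nonneg n), one_div,
          inv_mul_cancel₀ (ne_of_gt hγ0), Real.rpow_one] at h3
      have hpX : (p:ℝ) ≤ Real.sqrt X := by
        rw [show ((p:ℝ)) = Real.sqrt ((p:ℝ)^2) by
          rw [Real.sqrt_sq (Nat.cast_nonneg p)]]
        exact Real.sqrt_le_sqrt hp2
      have hsq1 : (1:ℝ) ≤ Real.sqrt X := by
        rw [show (1:ℝ) = Real.sqrt 1 by simp]
        exact Real.sqrt_le_sqrt hX1
      have h4 : ((p:ℝ) + 1) ^ γ ≤ (2 * Real.sqrt X) ^ γ := by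
        apply Real.rpow_le_rpow (by positivity) (by linarith) (le_of_lt hγ0)
      have h5 : (2 * Real.sqrt X) ^ γ ≤ 2 * X ^ (γ/2) := by
        rw [Real.mul_rpow (by norm_num) (Real.sqrt_nonneg X)]
        have h6 : (2:ℝ) ^ γ ≤ 2 := by
          calc (2:ℝ) ^ γ ≤ (2:ℝ) ^ (1:ℝ) :=
                Real.rpow_le_rpow_of_exponent_le (by norm_num) hγ1
            _ = 2 := Real.rpow_one 2
        have h7 : (Real.sqrt X) ^ γ = X ^ (γ/2) := by
          rw [Real.sqrt_eq_rpow, ← Real.rpow_mul (le_of_lt hX0)]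
          ring_nf
        rw [h7]
        exact mul_le_mul_of_nonneg_right h6 (Real.rpow_nonneg (le_of_lt hX0) _)
      linarith
    · intro p hp p' hp' hpp
      have hcp : cond p := (Finset.mem_filter.mp hp).2
      have hcp' : cond p' := (Finset.mem_filter.mp hp').2
      obtain ⟨_, hex⟩ := hcond p hcp
      obtain ⟨_, hex'⟩ := hcond p' hcp'
      have hfp : f p = hex.choose := by rw [hf]; exact dif_pos hex
      have hfp' : f p' = hex'.choose := by rw [hf]; exact dif_pos hex'
      have e1 := hex.choose_spec.2
      have e2 := hex'.choose_spec.2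
      simp only [hfp, hfp'] at hpp
      rw [e1, e2, hpp]
  calc ((F.filter cond).card : ℝ) ≤ ((Finset.Icc 1 M).card : ℝ) := by exact_mod_cast hcount
    _ ≤ 2 * X ^ (γ/2) := by
        rw [Nat.card_Icc]
        simp only [Nat.add_sub_cancel]
        exact le_trans (Nat.floor_le (by positivity)) (le_refl _)

/-- The exponential sum `S₂(t) = ∑_{λ₀X < p² ≤ X, p = ⌊n^{1/γ}⌋} p^{1-γ} e(tp²) log p`
over Piatetski-Shapiro primes of type `γ`. -/
noncomputable def S2 (γ lam₀ X t : ℝ) : ℂ :=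
  ∑ p ∈ Finset.Icc 1 (Nat.floor X),
    if Nat.Prime p ∧ lam₀ * X < (p : ℝ) ^ 2 ∧ (p : ℝ) ^ 2 ≤ X ∧
        (∃ n : ℕ, 0 < n ∧ p = Nat.floor ((n : ℝ) ^ (1/γ))) then
      (((p : ℝ) ^ (1 - γ) * Real.log p : ℝ) : ℂ) *
        Complex.exp (2 * Real.pi * Complex.I * (t * (p : ℝ) ^ 2))
    else 0

/-- `∫_{0}^{1} |S₂(t)|⁴ dt ≪ X^{2-γ+δ}`. -/

theorem integral_S2_fourth (γ lam₀ δ : ℝ) (hγ : 63/64 < γ) (hγ1 : γ < 1)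
    (h0 : 0 < lam₀) (h1 : lam₀ < 1) (hδ : 0 < δ) :
    ∃ C > 0, ∃ X₀ : ℝ, ∀ X ≥ X₀,
      (∫ t in (0:ℝ)..1, ‖S2 γ lam₀ X t‖ ^ 4) ≤ C * X ^ (2 - γ + δ) := by
  obtain ⟨C₁, hC₁pos, hdiv⟩ := divisor_bound (δ/4) (by positivity)
  refine ⟨4*(1+C₁)*(16/δ)^4, by positivity, 1, ?_⟩
  intro X hX1
  have hX0 : (0:ℝ) < X := lt_of_lt_of_le one_pos hX1
  have hγ0 : (0:ℝ) < γ := by linarith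
  have hγle1 : γ ≤ 1 := le_of_lt hγ1
  set cond : ℕ → Prop := fun p => Nat.Prime p ∧ lam₀ * X < (p:ℝ)^2 ∧ (p:ℝ)^2 ≤ X ∧
      (∃ n : ℕ, 0 < n ∧ p = Nat.floor ((n:ℝ)^(1/γ))) with hcond
  set F : Finset ℕ := Finset.Icc 1 (Nat.floor X) with hF
  set a : ℕ → ℝ := fun p => if cond p then (p:ℝ)^(1-γ) * Real.log p else 0 with ha
  have hS2 : ∀ t : ℝ, S2 γ lam₀ X t =
      ∑ p ∈ F, (a p : ℂ) * Complex.exp (2*Real.pi*Complex.I*((t:ℝ)*(p:ℝ)^2)) := by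
    intro t
    simp only [S2, ha, hcond, hF]
    refine Finset.sum_congr rfl fun p _ => ?_
    split_ifs with h
    · rfl
    · simp
  have h_int_eq : (∫ t in (0:ℝ)..1, ‖S2 γ lam₀ X t‖^4) =
      ∑ p ∈ F, ∑ q ∈ F, ∑ r ∈ F, ∑ s ∈ F, (a p * a r * a q * a s) *
        (if ((p:ℤ)^2 + (r:ℤ)^2 - (q:ℤ)^2 - (s:ℤ)^2 = 0) then 1 else 0) := by
    rw [← fourth_moment F a]
    apply intervalIntegral.integral_congr
    intro t _
    simp only [hS2]
  rw [h_int_eq]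
  -- coefficient bounds
  set B : ℝ := X ^ ((1-γ)/2) * Real.log X with hB
  have hBnn : 0 ≤ B := mul_nonneg (Real.rpow_nonneg hX0.le _) (Real.log_nonneg hX1)
  have h_a_nonneg : ∀ p : ℕ, 0 ≤ a p := by
    intro p
    simp only [ha]
    split_ifs with h
    · have hp1 : (1:ℝ) ≤ (p:ℝ) := by exact_mod_cast h.1.one_lt.le
      exact mul_nonneg (Real.rpow_nonneg (by positivity) _) (Real.log_nonneg hp1)
    · exact le_refl 0
  have h_a_le : ∀ p : ℕ, a p ≤ B := by
    intro p
    simp only [ha]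
    split_ifs with h
    · obtain ⟨hp, _, hp2, _⟩ := h
      have hp1 : (1:ℝ) ≤ (p:ℝ) := by exact_mod_cast hp.one_lt.le
      have hpX : (p:ℝ) ≤ Real.sqrt X := by
        rw [show ((p:ℝ)) = Real.sqrt ((p:ℝ)^2) by rw [Real.sqrt_sq (by positivity)]]
        exact Real.sqrt_le_sqrt hp2
      have hr1 : (p:ℝ)^(1-γ) ≤ (Real.sqrt X)^(1-γ) :=
        Real.rpow_le_rpow (by positivity) hpX (by linarith)
      have hr2 : (Real.sqrt X)^(1-γ) = X ^ ((1-γ)/2) := by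
        rw [Real.sqrt_eq_rpow, ← Real.rpow_mul hX0.le]
        ring_nf
      have hpX2 : (p:ℝ) ≤ X := by nlinarith [hp2, hp1]
      have hlog : Real.log p ≤ Real.log X := by
        apply Real.log_le_log (by positivity) hpX2
      rw [hB]
      exact mul_le_mul (hr2 ▸ hr1) hlog (Real.log_nonneg hp1) (Real.rpow_nonneg hX0.le _)
    · exact hBnn
  have hiff : ∀ p q r s : ℕ,
      ((p:ℤ)^2+(r:ℤ)^2-(q:ℤ)^2-(s:ℤ)^2 = 0) ↔ (p^2+r^2 = q^2+s^2) := by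
    intro p q r s
    constructor
    · intro h
      have h' : (p:ℤ)^2+(r:ℤ)^2 = (q:ℤ)^2+(s:ℤ)^2 := by linarith
      exact_mod_cast h'
    · intro h
      have h' : (p:ℤ)^2+(r:ℤ)^2 = (q:ℤ)^2+(s:ℤ)^2 := by exact_mod_cast h
      linarith
  have hite_nonneg : ∀ p q r s : ℕ, (0:ℝ) ≤ (if cond p then (if cond q then (if cond r then
      (if cond s then (if p^2+r^2 = q^2+s^2 then B^4 else 0) else 0) else 0) else 0) else 0) := by
    intro p q r s
    split_ifs <;> positivity
  have tw : ∀ p q r s : ℕ, (a p * a r * a q * a s) *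
      (if ((p:ℤ)^2+(r:ℤ)^2-(q:ℤ)^2-(s:ℤ)^2 = 0) then (1:ℝ) else 0)
      ≤ (if cond p then (if cond q then (if cond r then (if cond s then
          (if p^2+r^2 = q^2+s^2 then B^4 else 0) else 0) else 0) else 0) else 0) := by
    intro p q r s
    by_cases hp : cond p
    case neg =>
      have h0 : a p = 0 := by simp [ha, hp]
      rw [show a p * a r * a q * a s = 0 by rw [h0]; ring, zero_mul]
      exact hite_nonneg p q r s
    by_cases hq : cond q
    case neg =>
      have h0 : a q = 0 := by simp [ha, hq]
      rw [show a p * a r * a q * a s = 0 by rw [h0]; ring, zero_mul]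
      exact hite_nonneg p q r s
    by_cases hr : cond r
    case neg =>
      have h0 : a r = 0 := by simp [ha, hr]
      rw [show a p * a r * a q * a s = 0 by rw [h0]; ring, zero_mul]
      exact hite_nonneg p q r s
    by_cases hs : cond s
    case neg =>
      have h0 : a s = 0 := by simp [ha, hs]
      rw [show a p * a r * a q * a s = 0 by rw [h0]; ring, zero_mul]
      exact hite_nonneg p q r s
    rw [if_pos hp, if_pos hq, if_pos hr, if_pos hs]
    by_cases hk : ((p:ℤ)^2+(r:ℤ)^2-(q:ℤ)^2-(s:ℤ)^2 = 0)
    · rw [if_pos hk, if_pos ((hiff p q r s).mp hk), mul_one]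
      calc a p * a r * a q * a s ≤ B*B*B*B := by
            exact mul_le_mul (mul_le_mul (mul_le_mul (h_a_le p) (h_a_le r)
              (h_a_nonneg r) hBnn) (h_a_le q) (h_a_nonneg q) (by positivity))
              (h_a_le s) (h_a_nonneg s) (by positivity)
        _ = B^4 := by ring
    · rw [if_neg hk, mul_zero]
      split_ifs
      · positivity
      · exact le_refl 0
  set P : Finset ℕ := F.filter cond with hP
  set Q : Finset ((ℕ × ℕ) × ℕ × ℕ) := ((P ×ˢ P) ×ˢ (P ×ˢ P)).filter
      (fun x => x.1.1^2 + x.2.1^2 = x.1.2^2 + x.2.2^2) with hQ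
  have hsum1 : (∑ p ∈ F, ∑ q ∈ F, ∑ r ∈ F, ∑ s ∈ F, (a p * a r * a q * a s) *
        (if ((p:ℤ)^2 + (r:ℤ)^2 - (q:ℤ)^2 - (s:ℤ)^2 = 0) then (1:ℝ) else 0))
      ≤ ∑ p ∈ F, ∑ q ∈ F, ∑ r ∈ F, ∑ s ∈ F,
        (if cond p then (if cond q then (if cond r then (if cond s then
          (if p^2+r^2 = q^2+s^2 then B^4 else 0) else 0) else 0) else 0) else 0) :=
    Finset.sum_le_sum fun p _ => Finset.sum_le_sum fun q _ =>
      Finset.sum_le_sum fun r _ => Finset.sum_le_sum fun s _ => tw p q r s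
  have hsum2 : (∑ p ∈ F, ∑ q ∈ F, ∑ r ∈ F, ∑ s ∈ F,
        (if cond p then (if cond q then (if cond r then (if cond s then
          (if p^2+r^2 = q^2+s^2 then B^4 else 0) else 0) else 0) else 0) else 0))
      = ∑ p ∈ P, ∑ q ∈ P, ∑ r ∈ P, ∑ s ∈ P,
          (if p^2+r^2 = q^2+s^2 then B^4 else 0) := by
    rw [hP]
    rw [Finset.sum_filter]
    refine Finset.sum_congr rfl fun p _ => ?_
    by_cases hp : cond p
    case neg => have hp' := hp; simp only [hcond] at hp'; simp only [if_neg hp, if_neg hp']; simp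
    have hp' := hp; simp only [hcond] at hp'
    simp only [if_pos hp, if_pos hp']
    rw [Finset.sum_filter]
    refine Finset.sum_congr rfl fun q _ => ?_
    by_cases hq : cond q
    case neg => have hq' := hq; simp only [hcond] at hq'; simp only [if_neg hq, if_neg hq']; simp
    have hq' := hq; simp only [hcond] at hq'
    simp only [if_pos hq, if_pos hq']
    rw [Finset.sum_filter]
    refine Finset.sum_congr rfl fun r _ => ?_
    by_cases hr : cond r
    case neg => have hr' := hr; simp only [hcond] at hr'; simp only [if_neg hr, if_neg hr']; simp
    have hr' := hr; simp only [hcond] at hr'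
    simp only [if_pos hr, if_pos hr']
    rw [Finset.sum_filter]
  have hsum3 : (∑ p ∈ P, ∑ q ∈ P, ∑ r ∈ P, ∑ s ∈ P,
        (if p^2+r^2 = q^2+s^2 then B^4 else 0)) = (Q.card : ℝ) * B^4 := by
    have e1 : (∑ p ∈ P, ∑ q ∈ P, ∑ r ∈ P, ∑ s ∈ P,
        (if p^2+r^2 = q^2+s^2 then B^4 else 0))
        = ∑ x ∈ (P ×ˢ P) ×ˢ (P ×ˢ P),
            (if x.1.1^2 + x.2.1^2 = x.1.2^2 + x.2.2^2 then B^4 else 0) := by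
      conv_rhs => rw [Finset.sum_product, Finset.sum_product]
      refine Finset.sum_congr rfl fun p _ => Finset.sum_congr rfl fun q _ => ?_
      conv_rhs => rw [Finset.sum_product]
    rw [e1, hQ, ← Finset.sum_filter, Finset.sum_const, nsmul_eq_mul]
  -- counting bounds
  have hP1 : ∀ p ∈ P, 1 ≤ p := by
    intro p hp
    have := (Finset.mem_filter.mp hp).1
    rw [hF] at this
    exact (Finset.mem_Icc.mp this).1
  have hcond_sq : ∀ p ∈ P, (p:ℝ)^2 ≤ X := by
    intro p hp
    exact ((Finset.mem_filter.mp hp).2).2.2.1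
  have hdivcard : ∀ p ∈ P, ∀ q ∈ P, p ≠ q →
      (((Int.natAbs ((p:ℤ)^2 - (q:ℤ)^2)).divisors.card : ℝ) ≤ C₁ * X^(δ/4)) := by
    intro p hp q hq hne
    set m : ℕ := Int.natAbs ((p:ℤ)^2 - (q:ℤ)^2) with hm
    have hm0 : m ≠ 0 := by
      rw [hm, Int.natAbs_ne_zero]
      intro h0
      have h2 : (p:ℤ)^2 = (q:ℤ)^2 := by linarith [sub_eq_zero.mp h0]
      have h3 : p^2 = q^2 := by exact_mod_cast h2
      exact hne (Nat.pow_left_injective (by norm_num) h3)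
    have hmX : (m:ℝ) ≤ X := by
      have hcast : (m:ℝ) = |(p:ℝ)^2 - (q:ℝ)^2| := by
        rw [hm, Nat.cast_natAbs]
        push_cast
        ring_nf
      rw [hcast]
      have h1 : (p:ℝ)^2 ≤ X := hcond_sq p hp
      have h2 : (q:ℝ)^2 ≤ X := hcond_sq q hq
      have h3 : (0:ℝ) ≤ (p:ℝ)^2 := by positivity
      have h4 : (0:ℝ) ≤ (q:ℝ)^2 := by positivity
      rw [abs_le]
      constructor <;> linarith
    calc (↑m.divisors.card : ℝ) ≤ C₁ * (m:ℝ)^(δ/4) := hdiv m hm0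

      _ ≤ C₁ * X^(δ/4) := by
          apply mul_le_mul_of_nonneg_left _ (le_of_lt hC₁pos)
          exact Real.rpow_le_rpow (Nat.cast_nonneg m) hmX (by positivity)
  have hQbound : ((Q.card : ℕ) : ℝ) ≤ (P.card : ℝ)^2 * (1 + C₁ * X^(δ/4)) := by
    rw [hQ]
    exact quad_count P hP1 (C₁ * X^(δ/4)) (by positivity) hdivcard
  have hNb : ((P.card : ℕ) : ℝ) ≤ 2 * X^(γ/2) := by
    rw [hP]
    have h := PS_count γ X hγ0 hγle1 hX1 F cond (fun p hc => ⟨hc.2.2.1, hc.2.2.2⟩)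
    convert h using 3
    exact @Finset.filter_congr_decidable ℕ F cond _ (fun a => Classical.propDecidable (cond a))
  -- size of B
  have hBle : B ≤ (16/δ) * X^((1-γ)/2 + δ/16) := by
    have hlog : Real.log X ≤ (16/δ) * X^(δ/16) := by
      have h1 : Real.log (X^(δ/16)) ≤ X^(δ/16) := by
        have := Real.log_le_sub_one_of_pos (x := X^(δ/16)) (by positivity)
        linarith
      rw [Real.log_rpow hX0] at h1
      calc Real.log X = (16/δ) * ((δ/16) * Real.log X) := by field_simp
        _ ≤ (16/δ) * X^(δ/16) := by
            apply mul_le_mul_of_nonneg_left h1 (by positivity)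
    rw [hB]
    calc X^((1-γ)/2) * Real.log X ≤ X^((1-γ)/2) * ((16/δ) * X^(δ/16)) := by
          apply mul_le_mul_of_nonneg_left hlog (by positivity)
      _ = (16/δ) * X^((1-γ)/2 + δ/16) := by rw [Real.rpow_add hX0]; ring
  have hB4 : B^4 ≤ (16/δ)^4 * X^(2 - 2*γ + δ/4) := by
    calc B^4 ≤ ((16/δ) * X^((1-γ)/2 + δ/16))^4 := pow_le_pow_left₀ hBnn hBle 4
      _ = (16/δ)^4 * (X^((1-γ)/2 + δ/16))^4 := by rw [mul_pow]
      _ = (16/δ)^4 * X^(2 - 2*γ + δ/4) := by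
          congr 1
          rw [← Real.rpow_natCast (X ^ ((1-γ)/2 + δ/16)) 4, ← Real.rpow_mul hX0.le]
          congr 1
          push_cast
          ring
  -- final assembly
  have hNb2 : (P.card : ℝ)^2 ≤ 4 * X^γ := by
    calc (P.card : ℝ)^2 ≤ (2 * X^(γ/2))^2 := by
          apply pow_le_pow_left₀ (Nat.cast_nonneg _) hNb 2
      _ = 4 * (X^(γ/2))^2 := by ring
      _ = 4 * X^γ := by
          congr 1
          rw [← Real.rpow_natCast (X^(γ/2)) 2, ← Real.rpow_mul hX0.le]
          congr 1
          push_cast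
          ring
  have m1 : X^γ * X^(2-2*γ+δ/4) = X^(2-γ+δ/4) := by
    rw [← Real.rpow_add hX0]
    congr 1
    ring
  have m2 : X^(2-γ+δ/4) * X^(δ/4) = X^(2-γ+δ/2) := by
    rw [← Real.rpow_add hX0]
    congr 1
    ring
  have e1 : X^(2-γ+δ/4) ≤ X^(2-γ+δ) := Real.rpow_le_rpow_of_exponent_le hX1 (by linarith)
  have e2 : X^(2-γ+δ/2) ≤ X^(2-γ+δ) := Real.rpow_le_rpow_of_exponent_le hX1 (by linarith)
  calc (∑ p ∈ F, ∑ q ∈ F, ∑ r ∈ F, ∑ s ∈ F, (a p * a r * a q * a s) *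
        (if ((p:ℤ)^2 + (r:ℤ)^2 - (q:ℤ)^2 - (s:ℤ)^2 = 0) then (1:ℝ) else 0))
      ≤ (Q.card : ℝ) * B^4 := by rw [← hsum3, ← hsum2]; exact hsum1
    _ ≤ ((P.card : ℝ)^2 * (1 + C₁ * X^(δ/4))) * B^4 := by
        apply mul_le_mul_of_nonneg_right hQbound (by positivity)
    _ ≤ ((4 * X^γ) * (1 + C₁ * X^(δ/4))) * ((16/δ)^4 * X^(2 - 2*γ + δ/4)) := by
        apply mul_le_mul _ hB4 (by positivity) (by positivity)
        apply mul_le_mul_of_nonneg_right hNb2 (by positivity)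
    _ = 4 * (16/δ)^4 * ((X^γ * X^(2-2*γ+δ/4)) + C₁ * ((X^γ * X^(2-2*γ+δ/4)) * X^(δ/4))) := by
        ring
    _ = 4 * (16/δ)^4 * (X^(2-γ+δ/4) + C₁ * X^(2-γ+δ/2)) := by rw [m1, m2]
    _ ≤ 4 * (16/δ)^4 * (X^(2-γ+δ) + C₁ * X^(2-γ+δ)) := by
        apply mul_le_mul_of_nonneg_left _ (by positivity)
        have h3 : C₁ * X^(2-γ+δ/2) ≤ C₁ * X^(2-γ+δ) :=
          mul_le_mul_of_nonneg_left e2 (le_of_lt hC₁pos)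
        linarith
    _ = (4*(1+C₁)*(16/δ)^4) * X^(2-γ+δ) := by ring
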